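/- Let R ×_T S be a nontrivial fiber product ring with maximal ideal m. Assume grade(mT, T) = n > 0. If depth(R) = 0 or depth(S) = 0, then depth(R ×_T S) = 0. -/

import Mathlib

/-!
Common definitions: Betti numbers, Poincaré series, grade, depth, embedding
dimension, fiber product rings, and large homomorphisms.
-/

open CategoryTheory

universe u

/-- The length of a module, defined as the Krull dimension of its submodule
lattice (for a module annihilated by the maximal ideal of a local ring `A`,
this is its dimension as a vector space over the residue field `k = A/m_A`). -/
noncomputable def modLength (A : Type u) [CommRing A]
    (M : Type u) [AddCommGroup M] [Module A M] : ℕ :=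
  ((Order.krullDim (Submodule A M)).unbotD 0).toNat

/-- The `i`-th Betti number `β_i^A(M) = dim_k Tor_i^A(M, k)` of a module `M`
over a local ring `A` with residue field `k`. -/
noncomputable def betti (A : Type u) [CommRing A] [IsLocalRing A]
    (M : Type u) [AddCommGroup M] [Module A M] (i : ℕ) : ℕ :=
  modLength A (((Tor (ModuleCat.{u} A) i).obj (ModuleCat.of A M)).obj
      (ModuleCat.of A (IsLocalRing.ResidueField A)))

/-- The Poincaré series `P^A_M(t) = Σ_{i≥0} β_i^A(M) tⁱ`, as a formal power
series with rational coefficients. -/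
noncomputable def poincare (A : Type u) [CommRing A] [IsLocalRing A]
    (M : Type u) [AddCommGroup M] [Module A M] : PowerSeries ℚ :=
  PowerSeries.mk fun i => (betti A M i : ℚ)

/-- `grade(I, M)`: the length of the longest `M`-regular sequence contained in
the ideal `I`. -/
noncomputable def mgrade (A : Type u) [CommRing A] (I : Ideal A)
    (M : Type u) [AddCommGroup M] [Module A M] : ℕ∞ :=
  sSup {n : ℕ∞ | ∃ rs : List A, (∀ r ∈ rs, r ∈ I) ∧
    RingTheory.Sequence.IsRegular M rs ∧ n = rs.length}

/-- `depth(A) = grade(m_A, A)` for a local ring `A`. -/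
noncomputable def rdepth (A : Type u) [CommRing A] [IsLocalRing A] : ℕ∞ :=
  mgrade A (IsLocalRing.maximalIdeal A) A

/-- The embedding dimension `edim(A) = dim_k (m_A / m_A²)`. -/
noncomputable def edim (A : Type u) [CommRing A] [IsLocalRing A] : ℕ :=
  Module.finrank (IsLocalRing.ResidueField A) (IsLocalRing.CotangentSpace A)

/-- `M` has finite projective dimension: it admits a projective resolution
which vanishes in all sufficiently large degrees. -/
def HasFiniteProjDim (A : Type u) [CommRing A]
    (M : Type u) [AddCommGroup M] [Module A M] : Prop :=
  ∃ (P : CategoryTheory.ProjectiveResolution (ModuleCat.of A M)) (n : ℕ),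
    ∀ i : ℕ, n < i → CategoryTheory.Limits.IsZero (P.complex.X i)

/-- The fiber product `R ×_T S = {(r, s) : π_R r = π_S s}` as a subring of `R × S`. -/
def fiberProd {R S T : Type u} [CommRing R] [CommRing S] [CommRing T]
    (πR : R →+* T) (πS : S →+* T) : Subring (R × S) :=
  RingHom.eqLocus (πR.comp (RingHom.fst R S)) (πS.comp (RingHom.snd R S))

/-- The first natural projection `η_R : R ×_T S → R`. -/
def etaR {R S T : Type u} [CommRing R] [CommRing S] [CommRing T]
    (πR : R →+* T) (πS : S →+* T) : ↥(fiberProd πR πS) →+* R :=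
  (RingHom.fst R S).comp (fiberProd πR πS).subtype

/-- The second natural projection `η_S : R ×_T S → S`. -/
def etaS {R S T : Type u} [CommRing R] [CommRing S] [CommRing T]
    (πR : R →+* T) (πS : S →+* T) : ↥(fiberProd πR πS) →+* S :=
  (RingHom.snd R S).comp (fiberProd πR πS).subtype

/-- The extension `mR` of the maximal ideal `m` of `R ×_T S` to `R` under `η_R`. -/
noncomputable def mExtR {R S T : Type u} [CommRing R] [CommRing S] [CommRing T]
    (πR : R →+* T) (πS : S →+* T) [IsLocalRing ↥(fiberProd πR πS)] : Ideal R :=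
  Ideal.map (etaR πR πS) (IsLocalRing.maximalIdeal ↥(fiberProd πR πS))

/-- The extension `mS` of the maximal ideal `m` of `R ×_T S` to `S` under `η_S`. -/
noncomputable def mExtS {R S T : Type u} [CommRing R] [CommRing S] [CommRing T]
    (πR : R →+* T) (πS : S →+* T) [IsLocalRing ↥(fiberProd πR πS)] : Ideal S :=
  Ideal.map (etaS πR πS) (IsLocalRing.maximalIdeal ↥(fiberProd πR πS))

/-- The extension `mT` of the maximal ideal `m` of `R ×_T S` to `T` under the
natural surjection `π_R ∘ η_R`. -/
noncomputable def mExtT {R S T : Type u} [CommRing R] [CommRing S] [CommRing T]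
    (πR : R →+* T) (πS : S →+* T) [IsLocalRing ↥(fiberProd πR πS)] : Ideal T :=
  Ideal.map (πR.comp (etaR πR πS)) (IsLocalRing.maximalIdeal ↥(fiberProd πR πS))

/-- A ring homomorphism `f : A → B` between local rings is *large* if
`P^A_N(t) = P^B_N(t) · P^A_B(t)` for every finitely generated nonzero
`B`-module `N`, viewed as an `A`-module via `f`. -/
def IsLargeHom {A B : Type u} [CommRing A] [IsLocalRing A] [CommRing B] [IsLocalRing B]
    (f : A →+* B) : Prop :=
  ∀ (N : Type u) [AddCommGroup N] [Module B N], Module.Finite B N → Nontrivial N →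
    letI : Module A N := Module.compHom N f
    letI : Module A B := Module.compHom B f
    poincare A N = poincare B N * poincare A B

/-!
If, say, `depth R = 0`, then `m_R` annihilates some `x ≠ 0`. Since `mT = m_T` contains a
`T`-regular element `c = π_R r` with `r ∈ m_R`, the relation `c · π_R x = π_R (r x) = 0` forces
`π_R x = 0`, so `(x, 0)` lies in `R ×_T S`. It is annihilated by `m`, because the first
coordinates of elements of `m` lie in `m_R`; hence no element of `m` is regular.
-/

open IsLocalRing RingTheory.Sequence

lemma exists_isSMulRegular_of_mgrade_ne_zero {A M : Type u} [CommRing A] [AddCommGroup M]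
    [Module A M] {I : Ideal A} (h : mgrade A I M ≠ 0) : ∃ r ∈ I, IsSMulRegular M r := by
  by_contra! hI
  refine h (le_antisymm (sSup_le ?_) bot_le)
  rintro _ ⟨_ | ⟨r, rs⟩, hrs, hreg, rfl⟩
  · simp
  · exact absurd ((isWeaklyRegular_cons_iff M r rs).mp hreg.toIsWeaklyRegular).1
      (hI r (hrs r List.mem_cons_self))

section Depth

variable {A : Type u} [CommRing A] [IsLocalRing A]

lemma rdepth_eq_zero_of_mul_eq_zero {x : A} (hx : x ≠ 0)
    (hmx : ∀ a ∈ maximalIdeal A, a * x = 0) : rdepth A = 0 := by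
  by_contra h
  obtain ⟨a, ha, hreg⟩ := exists_isSMulRegular_of_mgrade_ne_zero h
  exact hx (hreg (by simp only [smul_eq_mul, hmx a ha, mul_zero]))

lemma exists_ne_zero_mul_eq_zero_of_rdepth_eq_zero [IsNoetherianRing A] (h : rdepth A = 0) :
    ∃ x : A, x ≠ 0 ∧ ∀ a ∈ maximalIdeal A, a * x = 0 := by
  have hzd : Disjoint (maximalIdeal A : Set A) (nonZeroDivisors A) := by
    refine Set.disjoint_left.mpr fun a ha hnzd => ?_
    have hreg : IsRegular A [a] := IsRegular.of_isWeaklyRegular_of_mem_maximalIdeal A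
      (fun r hr => List.mem_singleton.mp hr ▸ ha) ((isWeaklyRegular_singleton_iff A a).mpr
        (isRegular_iff_mem_nonZeroDivisors.mpr hnzd).left)
    have : (1 : ℕ∞) ≤ rdepth A :=
      le_sSup ⟨[a], fun r hr => List.mem_singleton.mp hr ▸ ha, hreg, rfl⟩
    simp [h] at this
  obtain ⟨x, hx, hx0⟩ :=
    SetLike.exists_of_lt (Ideal.bot_lt_annihilator_of_disjoint_nonZeroDivisors hzd)
  refine ⟨x, hx0, fun a ha => ?_⟩
  simpa [mul_comm] using congrArg Subtype.val (Module.mem_annihilator.mp hx ⟨a, ha⟩)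

end Depth

lemma map_eq_zero_of_forall_mul_eq_zero {A B : Type u} [CommRing A] [CommRing B] [IsLocalRing A]
    [IsLocalRing B] (f : A →+* B) (hf : Function.Surjective f) {c : B}
    (hc : c ∈ maximalIdeal B) (hreg : IsSMulRegular B c) {x : A}
    (hmx : ∀ a ∈ maximalIdeal A, a * x = 0) : f x = 0 := by
  obtain ⟨r, hr, rfl⟩ := (Ideal.mem_map_iff_of_surjective f hf).mp
    (map_maximalIdeal_of_surjective f hf ▸ hc)
  exact hreg.right_eq_zero_of_smul (by rw [smul_eq_mul, ← map_mul, hmx r hr, map_zero])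

section FiberProduct

variable {R S T : Type u} [CommRing R] [CommRing S] [CommRing T] (πR : R →+* T) (πS : S →+* T)

lemma mem_fiberProd {p : R × S} : p ∈ fiberProd πR πS ↔ πR p.1 = πS p.2 := Iff.rfl

lemma etaR_surjective (hπS : Function.Surjective πS) : Function.Surjective (etaR πR πS) := by
  intro r
  obtain ⟨s, hs⟩ := hπS (πR r)
  exact ⟨⟨(r, s), hs.symm⟩, rfl⟩

lemma etaS_surjective (hπR : Function.Surjective πR) : Function.Surjective (etaS πR πS) := by
  intro s
  obtain ⟨r, hr⟩ := hπR (πS s)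
  exact ⟨⟨(r, s), hr⟩, rfl⟩

variable [IsLocalRing ↥(fiberProd πR πS)]

lemma mExtT_eq_maximalIdeal [IsLocalRing R] [IsLocalRing T] (hπR : Function.Surjective πR)
    (hπS : Function.Surjective πS) : mExtT πR πS = maximalIdeal T := by
  rw [mExtT, ← Ideal.map_map, map_maximalIdeal_of_surjective _ (etaR_surjective πR πS hπS),
    map_maximalIdeal_of_surjective _ hπR]

namespace fiberProd

lemma fst_mem_maximalIdeal [IsLocalRing R] (hπS : Function.Surjective πS)
    {z : ↥(fiberProd πR πS)} (hz : z ∈ maximalIdeal ↥(fiberProd πR πS)) : z.1.1 ∈ maximalIdeal R :=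
  map_maximalIdeal_of_surjective _ (etaR_surjective πR πS hπS) ▸ Ideal.mem_map_of_mem _ hz

lemma snd_mem_maximalIdeal [IsLocalRing S] (hπR : Function.Surjective πR)
    {z : ↥(fiberProd πR πS)} (hz : z ∈ maximalIdeal ↥(fiberProd πR πS)) : z.1.2 ∈ maximalIdeal S :=
  map_maximalIdeal_of_surjective _ (etaS_surjective πR πS hπR) ▸ Ideal.mem_map_of_mem _ hz

lemma rdepth_eq_zero_of_left [IsLocalRing R] (hπS : Function.Surjective πS) {x : R}
    (hx : x ≠ 0) (hπx : πR x = 0) (hmx : ∀ a ∈ maximalIdeal R, a * x = 0) :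
    rdepth ↥(fiberProd πR πS) = 0 :=
  rdepth_eq_zero_of_mul_eq_zero (x := ⟨(x, 0), by rw [mem_fiberProd, hπx, map_zero]⟩)
    (fun h => hx congr(Prod.fst (Subtype.val $h)))
    fun z hz => Subtype.ext (Prod.ext (hmx _ (fst_mem_maximalIdeal πR πS hπS hz)) (mul_zero _))

lemma rdepth_eq_zero_of_right [IsLocalRing S] (hπR : Function.Surjective πR) {y : S}
    (hy : y ≠ 0) (hπy : πS y = 0) (hmy : ∀ a ∈ maximalIdeal S, a * y = 0) :
    rdepth ↥(fiberProd πR πS) = 0 :=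
  rdepth_eq_zero_of_mul_eq_zero (x := ⟨(0, y), by rw [mem_fiberProd, hπy, map_zero]⟩)
    (fun h => hy congr(Prod.snd (Subtype.val $h)))
    fun z hz => Subtype.ext (Prod.ext (mul_zero _) (hmy _ (snd_mem_maximalIdeal πR πS hπR hz)))

end fiberProd

end FiberProduct

theorem statement_10_general
    {R S T : Type u} [CommRing R] [CommRing S] [CommRing T]
    [IsNoetherianRing R] [IsNoetherianRing S]
    [IsLocalRing R] [IsLocalRing S] [IsLocalRing T]
    (πR : R →+* T) (πS : S →+* T)
    (hπR : Function.Surjective πR) (hπS : Function.Surjective πS)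
    [IsLocalRing ↥(fiberProd πR πS)]
    (n : ℕ) (hn : 0 < n)
    (hgT : mgrade T (mExtT πR πS) T = (n : ℕ∞))
    (h : rdepth R = 0 ∨ rdepth S = 0) :
    rdepth (↥(fiberProd πR πS)) = 0 := by
  obtain ⟨c, hc, hreg⟩ : ∃ c ∈ maximalIdeal T, IsSMulRegular T c := by
    rw [← mExtT_eq_maximalIdeal πR πS hπR hπS]
    exact exists_isSMulRegular_of_mgrade_ne_zero (by simpa [hgT] using hn.ne')
  rcases h with hR | hS
  · obtain ⟨x, hx, hmx⟩ := exists_ne_zero_mul_eq_zero_of_rdepth_eq_zero hR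
    exact fiberProd.rdepth_eq_zero_of_left πR πS hπS hx
      (map_eq_zero_of_forall_mul_eq_zero πR hπR hc hreg hmx) hmx
  · obtain ⟨y, hy, hmy⟩ := exists_ne_zero_mul_eq_zero_of_rdepth_eq_zero hS
    exact fiberProd.rdepth_eq_zero_of_right πR πS hπR hy
      (map_eq_zero_of_forall_mul_eq_zero πS hπS hc hreg hmy) hmy

theorem statement_10
    {R S T : Type u} [CommRing R] [CommRing S] [CommRing T]
    [IsNoetherianRing R] [IsNoetherianRing S] [IsNoetherianRing T]
    [IsLocalRing R] [IsLocalRing S] [IsLocalRing T]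
    (πR : R →+* T) (πS : S →+* T)
    (hπR : Function.Surjective πR) (hπS : Function.Surjective πS)
    (hkR : RingHom.ker πR ≠ ⊥) (hkS : RingHom.ker πS ≠ ⊥)
    [IsNoetherianRing ↥(fiberProd πR πS)] [IsLocalRing ↥(fiberProd πR πS)]
    (n : ℕ) (hn : 0 < n)
    (hgT : mgrade T (mExtT πR πS) T = (n : ℕ∞))
    (h : rdepth R = 0 ∨ rdepth S = 0) :
    rdepth (↥(fiberProd πR πS)) = 0 :=
  statement_10_general πR πS hπR hπS n hn hgT h
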